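/- Suppose $\lambda : [0,T) \to (0,\infty)$ and $\rho : [0,T) \to \mathbb{R}$ are functions such that: (i) $\lambda$ is continuous; (ii) for every $t_0 \in (0,T)$ there exist $\delta > 0$ and a differentiable function $\Lambda : (t_0 - \delta, t_0] \to (0,\infty)$ with $\Lambda(t_0) = \lambda(t_0)$, $\Lambda(t) \ge \lambda(t)$ for all $t$, and $\Lambda'(t) > \Lambda(t)\rho(t)$ on $(t_0-\delta, t_0]$; and (iii) $\rho$ is continuous. Then $t \mapsto \lambda(t)\exp(-\int_0^t \rho(s)ds)$ is strictly increasing on $[0,T)$. -/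

import Mathlib

/-!
Write `F(t) = λ(t) e^{-∫₀ᵗ ρ}`. Near each `t₀`, the weighted barrier `Λ(t) e^{-∫₀ᵗ ρ}` has
derivative `(Λ' - Λρ) e^{-∫₀ᵗ ρ} > 0`, lies above `F` and touches it at `t₀`; hence `F(t) < F(t₀)`
for all `t` slightly left of `t₀`. A continuous function with this one-sided property is strictly
increasing: if `F(b) ≤ F(a)` with `a < b`, then `F` attains its minimum over `[a, b]` at some point
of `(a, b]`, and points just to its left would have smaller values.
-/

open Set Filter Topology

theorem lt_of_continuousOn_of_eventually_lt_left {f : ℝ → ℝ} {a b : ℝ} (hab : a < b)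
    (hf : ContinuousOn f (Icc a b)) (hleft : ∀ t ∈ Ioc a b, ∀ᶠ s in 𝓝[<] t, f s < f t) :
    f a < f b := by
  by_contra! hba
  obtain ⟨c, hc, hmin⟩ := isCompact_Icc.exists_isMinOn (nonempty_Icc.2 hab.le) hf
  obtain ⟨m, hm, hmmin⟩ : ∃ m ∈ Ioc a b, IsMinOn f (Icc a b) m := by
    rcases hc.1.eq_or_lt with rfl | hac
    · exact ⟨b, right_mem_Ioc.2 hab, fun x hx => (hmin hx).trans' hba⟩
    · exact ⟨c, ⟨hac, hc.2⟩, hmin⟩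
  obtain ⟨s, hs_lt, hs_mem⟩ :=
    ((hleft m hm).and (Ioo_mem_nhdsLT hm.1)).exists
  exact (hs_lt.trans_le (hmmin ⟨hs_mem.1.le, hs_mem.2.le.trans hm.2⟩)).false

theorem eventually_lt_of_le_of_hasDerivAt_pos {f g g' : ℝ → ℝ} {a t₀ : ℝ} (ha : a < t₀)
    (hg : ∀ t ∈ Ioc a t₀, HasDerivAt g (g' t) t) (hg' : ∀ t ∈ Ioc a t₀, 0 < g' t)
    (hle : ∀ t ∈ Ioc a t₀, f t ≤ g t) (heq : g t₀ = f t₀) :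
    ∀ᶠ t in 𝓝[<] t₀, f t < f t₀ := by
  have hmono : StrictMonoOn g (Ioc a t₀) := by
    refine strictMonoOn_of_hasDerivWithinAt_pos (f' := g') (convex_Ioc a t₀)
      (fun t ht => (hg t ht).continuousAt.continuousWithinAt) (fun t ht => ?_) (fun t ht => ?_)
    all_goals rw [interior_Ioc] at ht
    · exact (hg t (Ioo_subset_Ioc_self ht)).hasDerivWithinAt
    · exact hg' t (Ioo_subset_Ioc_self ht)
  filter_upwards [Ioo_mem_nhdsLT ha] with t ht
  calc f t ≤ g t := hle t (Ioo_subset_Ioc_self ht)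
    _ < g t₀ := hmono (Ioo_subset_Ioc_self ht) (right_mem_Ioc.2 ha) ht.2
    _ = f t₀ := heq

theorem HasDerivAt.mul_exp_neg {Λ I : ℝ → ℝ} {Λ' r t : ℝ} (hΛ : HasDerivAt Λ Λ' t)
    (hI : HasDerivAt I r t) :
    HasDerivAt (fun u => Λ u * Real.exp (-I u)) ((Λ' - Λ t * r) * Real.exp (-I t)) t :=
  (hΛ.mul hI.neg.exp).congr_deriv (by simp only [Pi.neg_apply]; ring)

theorem hasDerivAt_primitive_of_continuousOn_Ico {ρ : ℝ → ℝ} {a b t : ℝ}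
    (hρ : ContinuousOn ρ (Ico a b)) (ht : t ∈ Ioo a b) :
    HasDerivAt (fun u => ∫ s in a..u, ρ s) (ρ t) t := by
  have hnhds : Ico a b ∈ 𝓝 t := Ico_mem_nhds ht.1 ht.2
  have hsub : uIcc a t ⊆ Ico a b := by
    rw [uIcc_of_le ht.1.le]
    exact Icc_subset_Ico_right ht.2
  exact intervalIntegral.integral_hasDerivAt_right (hρ.mono hsub).intervalIntegrable
    ⟨_, hnhds, hρ.aestronglyMeasurable measurableSet_Ico⟩ (hρ.continuousAt hnhds)

theorem stmt_11_general (T : ℝ) (lam ρ : ℝ → ℝ)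
    (hcont : ContinuousOn lam (Ico 0 T))
    (hρ : ContinuousOn ρ (Ico 0 T))
    (hbar : ∀ t₀ ∈ Ioo (0 : ℝ) T, ∃ δ > (0 : ℝ), ∃ Λ Λ' : ℝ → ℝ,
      Λ t₀ = lam t₀ ∧ ∀ t ∈ Ioc (t₀ - δ) t₀,
        0 < Λ t ∧ lam t ≤ Λ t ∧ HasDerivAt Λ (Λ' t) t ∧ Λ t * ρ t < Λ' t) :
    StrictMonoOn (fun t => lam t * Real.exp (-∫ s in (0 : ℝ)..t, ρ s)) (Ico 0 T) := by
  intro a ha b hb hab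
  have hIcc : Icc 0 b ⊆ Ico 0 T := Icc_subset_Ico_right hb.2
  have hprim : ContinuousOn (fun u => ∫ s in (0 : ℝ)..u, ρ s) (Icc 0 b) := by
    rw [← uIcc_of_le hb.1] at hIcc ⊢
    exact intervalIntegral.continuousOn_primitive_interval (hρ.mono hIcc).integrableOn_uIcc
  refine lt_of_continuousOn_of_eventually_lt_left
    (f := fun t => lam t * Real.exp (-∫ s in (0 : ℝ)..t, ρ s)) hab
    (((hcont.mono hIcc).mul hprim.neg.rexp).mono (Icc_subset_Icc_left ha.1)) fun t₀ ht₀ => ?_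
  have ht₀T : t₀ ∈ Ioo 0 T := ⟨ha.1.trans_lt ht₀.1, ht₀.2.trans_lt hb.2⟩
  obtain ⟨δ, hδ, Λ, Λ', heq, hΛ⟩ := hbar t₀ ht₀T
  have hleft : ∀ t ∈ Ioc (max (t₀ - δ) 0) t₀, t ∈ Ioc (t₀ - δ) t₀ ∧ t ∈ Ioo 0 T :=
    fun t ht => ⟨⟨(le_max_left _ _).trans_lt ht.1, ht.2⟩,
      ⟨(le_max_right _ _).trans_lt ht.1, ht.2.trans_lt ht₀T.2⟩⟩
  refine eventually_lt_of_le_of_hasDerivAt_pos (max_lt (by linarith) ht₀T.1)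
    (fun t ht => ((hΛ t (hleft t ht).1).2.2.1).mul_exp_neg
      (hasDerivAt_primitive_of_continuousOn_Ico hρ (hleft t ht).2))
    (fun t ht => mul_pos (sub_pos.2 (hΛ t (hleft t ht).1).2.2.2) (Real.exp_pos _))
    (fun t ht => mul_le_mul_of_nonneg_right (hΛ t (hleft t ht).1).2.1 (Real.exp_pos _).le)
    (by rw [heq])

/-- abstract barrier argument: if `λ > 0` is continuous on `[0,T)`, `ρ` is
continuous, and every `t₀ ∈ (0,T)` admits a positive differentiable upper barrier `Λ` on
`(t₀-δ, t₀]` touching `λ` at `t₀` with `Λ' > Λρ`, then `t ↦ λ(t)·exp(-∫₀ᵗ ρ)` is strictly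
increasing on `[0,T)`. -/
theorem stmt_11 (T : ℝ) (hT : 0 < T) (lam ρ : ℝ → ℝ)
    (hpos : ∀ t ∈ Ico (0 : ℝ) T, 0 < lam t)
    (hcont : ContinuousOn lam (Ico 0 T))
    (hρ : ContinuousOn ρ (Ico 0 T))
    (hbar : ∀ t₀ ∈ Ioo (0 : ℝ) T, ∃ δ > (0 : ℝ), ∃ Λ Λ' : ℝ → ℝ,
      Λ t₀ = lam t₀ ∧ ∀ t ∈ Ioc (t₀ - δ) t₀,
        0 < Λ t ∧ lam t ≤ Λ t ∧ HasDerivAt Λ (Λ' t) t ∧ Λ t * ρ t < Λ' t) :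
    StrictMonoOn (fun t => lam t * Real.exp (-∫ s in (0 : ℝ)..t, ρ s)) (Ico 0 T) :=
  stmt_11_general T lam ρ hcont hρ hbar
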